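/- (Lemma 1.) For every interpreted system with regular labelling with model M and every EHS⁺_{AB̄N} formula φ (an EHS⁺ formula whose modalities are all among K_i, C_Γ, ⟨A⟩, ⟨B̄⟩, ⟨N⟩), the set { MCT_I^φ : I an interval in M } of modal context trees has at most f(φ) elements. -/

import Mathlib

/-- The Halpern-Shoham interval modalities. -/
inductive HSMod : Type where
  | A | Abar | B | Bbar | D | Dbar | E | Ebar | L | Lbar | N | Nbar | O | Obar
  deriving DecidableEq

/-- Formulas of the logic EHS⁺ over agents `0,…,m` and propositional variables `V`. -/
inductive EHSFormula (m : ℕ) (V : Type) : Type where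
  | pt : EHSFormula m V
  | prop : V → EHSFormula m V
  | neg : EHSFormula m V → EHSFormula m V
  | conj : EHSFormula m V → EHSFormula m V → EHSFormula m V
  | know : Fin (m + 1) → EHSFormula m V → EHSFormula m V
  | common : Finset (Fin (m + 1)) → EHSFormula m V → EHSFormula m V
  | dia : HSMod → EHSFormula m V → EHSFormula m V
  deriving DecidableEq

/-- An interpreted system with regular labelling over agents `0,…,m` (agent `0` is the
environment) and variables `Var`. -/
structure ISRL (m : ℕ) (Var : Type) where
  L : Fin (m + 1) → Type
  finL : ∀ i, Fintype (L i)
  l0 : ∀ i, L i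
  ACT : Fin (m + 1) → Type
  finACT : ∀ i, Fintype (ACT i)
  P : ∀ i, L i → Set (ACT i)
  T : ∀ i, L i → (∀ j, ACT j) → L i → Prop
  lab : Var → RegularExpression (∀ i, L i)

attribute [instance] ISRL.finL ISRL.finACT

namespace ISRL

variable {m : ℕ} {Var : Type}

/-- Global configurations. -/
abbrev G (IS : ISRL m Var) : Type := ∀ i, IS.L i

instance (IS : ISRL m Var) : Fintype IS.G := Pi.instFintype

/-- The initial global configuration. -/
def g0 (IS : ISRL m Var) : IS.G := IS.l0

/-- The global transition relation `t^G`. -/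
def tG (IS : ISRL m Var) (g g' : IS.G) : Prop :=
  ∃ a : ∀ j, IS.ACT j, ∀ i, a i ∈ IS.P i (g i) ∧ IS.T i (g i) a (g' i)

/-- A partial state: a nonempty `t^G`-chain of configurations. -/
def IsPState (IS : ISRL m Var) (w : List IS.G) : Prop :=
  w ≠ [] ∧ w.Chain' IS.tG

/-- A global state of the model: a partial state starting at the initial configuration. -/
def IsState (IS : ISRL m Var) (w : List IS.G) : Prop :=
  IS.IsPState w ∧ w.head? = some IS.g0

/-- `g(s)`: the actual configuration of a (partial) state, i.e. its last configuration. -/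
def gOf (IS : ISRL m Var) (w : List IS.G) : IS.G := w.getLastD IS.g0

/-- The global transition relation `t` of the model: extension by exactly one configuration. -/
def step (IS : ISRL m Var) (w w' : List IS.G) : Prop := ∃ g : IS.G, w' = w ++ [g]

/-- Epistemic indistinguishability of states for agent `i`. -/
def simS (IS : ISRL m Var) (i : Fin (m + 1)) (w w' : List IS.G) : Prop :=
  IS.gOf w i = IS.gOf w' i

/-- An interval of the model: a nonempty `t`-path of global states. -/
def IsInterval (IS : ISRL m Var) (l : List (List IS.G)) : Prop :=
  l ≠ [] ∧ (∀ w ∈ l, IS.IsState w) ∧ l.Chain' IS.step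

/-- Intervals of the model of `IS`. -/
structure Interval (IS : ISRL m Var) : Type where
  seq : List (List IS.G)
  isInterval : IS.IsInterval seq

namespace Interval

variable {IS : ISRL m Var}

/-- `first(I)`. -/
def first (I : Interval IS) : List IS.G := I.seq.headD []

/-- `last(I)`. -/
def last (I : Interval IS) : List IS.G := I.seq.getLastD []

/-- `I` is a point interval. -/
def isPt (I : Interval IS) : Prop := I.seq.length = 1

/-- `g(I)`, the word of configurations read along `I`. -/
def gword (I : Interval IS) : List IS.G := I.seq.map IS.gOf

end Interval

section rels

variable {IS : ISRL m Var}

def relA (I I' : Interval IS) : Prop := I'.first = I.last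
def relB (I I' : Interval IS) : Prop :=
  ∃ J : List (List IS.G), J ≠ [] ∧ I.seq = I'.seq ++ J
def relD (I I' : Interval IS) : Prop :=
  ∃ J K : List (List IS.G), J ≠ [] ∧ K ≠ [] ∧ I.seq = J ++ I'.seq ++ K
def relE (I I' : Interval IS) : Prop :=
  ∃ J : List (List IS.G), J ≠ [] ∧ I.seq = J ++ I'.seq
def relL (I I' : Interval IS) : Prop := Relation.TransGen IS.step I.last I'.first
def relN (I I' : Interval IS) : Prop := IS.step I.last I'.first
def relO (I I' : Interval IS) : Prop :=
  ∃ J K : List (List IS.G), J ≠ [] ∧ K ≠ [] ∧ I.seq ++ J = K ++ I'.seq ∧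
    IS.IsInterval (I.seq ++ J)

end rels

/-- The Allen relations on intervals of the model of `IS`. -/
def hsRel (IS : ISRL m Var) : HSMod → Interval IS → Interval IS → Prop
  | .A => fun I I' => relA I I'
  | .Abar => fun I I' => relA I' I
  | .B => fun I I' => relB I I'
  | .Bbar => fun I I' => relB I' I
  | .D => fun I I' => relD I I'
  | .Dbar => fun I I' => relD I' I
  | .E => fun I I' => relE I I'
  | .Ebar => fun I I' => relE I' I
  | .L => fun I I' => relL I I'
  | .Lbar => fun I I' => relL I' I
  | .N => fun I I' => relN I I'
  | .Nbar => fun I I' => relN I' I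
  | .O => fun I I' => relO I I'
  | .Obar => fun I I' => relO I' I

/-- Epistemic indistinguishability of intervals for agent `i`. -/
def simI (IS : ISRL m Var) (i : Fin (m + 1)) (I I' : Interval IS) : Prop :=
  List.Forall₂ (IS.simS i) I.seq I'.seq

/-- `∼_Γ`: the transitive closure of the union of the `∼_i`, `i ∈ Γ`. -/
def simC (IS : ISRL m Var) (Γ : Finset (Fin (m + 1))) : Interval IS → Interval IS → Prop :=
  Relation.TransGen (fun I I' => ∃ i ∈ Γ, IS.simI i I I')

/-- Satisfaction of EHS⁺ formulas at an interval, with respect to a labelling `lab`. -/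
def Sat (IS : ISRL m Var) {W : Type} (lab : W → RegularExpression IS.G) :
    EHSFormula m W → Interval IS → Prop
  | .pt, I => I.isPt
  | .prop p, I => I.gword ∈ (lab p).matches'
  | .neg φ, I => ¬ Sat IS lab φ I
  | .conj φ ψ, I => Sat IS lab φ I ∧ Sat IS lab ψ I
  | .know i φ, I => ∀ I', IS.simI i I' I → Sat IS lab φ I'
  | .common Γ φ, I => ∀ I', IS.simC Γ I' I → Sat IS lab φ I'
  | .dia X φ, I => ∃ I', IS.hsRel X I I' ∧ Sat IS lab φ I'

end ISRL

/-- The `AB̄N` fragment of EHS⁺: all modalities are among `K_i`, `C_Γ`, `⟨A⟩`, `⟨B̄⟩`, `⟨N⟩`. -/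
def IsABN {m : ℕ} {V : Type} : EHSFormula m V → Prop
  | .pt => True
  | .prop _ => True
  | .neg φ => IsABN φ
  | .conj φ ψ => IsABN φ ∧ IsABN ψ
  | .know _ φ => IsABN φ
  | .common _ φ => IsABN φ
  | .dia X φ => (X = HSMod.A ∨ X = HSMod.Bbar ∨ X = HSMod.N) ∧ IsABN φ

/-- A size function on formulas (used as a termination measure). -/
def fsize {m : ℕ} {V : Type} : EHSFormula m V → ℕ
  | .pt => 1
  | .prop _ => 1
  | .neg φ => fsize φ + 1
  | .conj φ ψ => fsize φ + fsize ψ + 1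
  | .know _ φ => fsize φ + 1
  | .common _ φ => fsize φ + 1
  | .dia _ φ => fsize φ + 1

/-- The set of top-level subformulas of a formula: modal subformulas not in the scope of
any modality. -/
def TL {m : ℕ} {V : Type} [DecidableEq V] : EHSFormula m V → Finset (EHSFormula m V)
  | .pt => ∅
  | .prop _ => ∅
  | .neg φ => TL φ
  | .conj φ ψ => TL φ ∪ TL ψ
  | .know i φ => {EHSFormula.know i φ}
  | .common Γ φ => {EHSFormula.common Γ φ}
  | .dia X φ => {EHSFormula.dia X φ}

/-- The body of a (modal) formula. -/
def body {m : ℕ} {V : Type} : EHSFormula m V → EHSFormula m V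
  | .pt => .pt
  | .prop p => .prop p
  | .neg φ => .neg φ
  | .conj φ ψ => .conj φ ψ
  | .know _ φ => φ
  | .common _ φ => φ
  | .dia _ φ => φ

theorem fsize_body_lt {m : ℕ} {V : Type} [DecidableEq V] (φ : EHSFormula m V) :
    ∀ χ ∈ TL φ, fsize (body χ) < fsize φ := by
  induction φ with
  | pt => simp [TL]
  | prop p => simp [TL]
  | neg φ ih =>
      intro χ hχ
      have := ih χ hχ
      simp only [fsize]
      omega
  | conj φ ψ ih1 ih2 =>
      intro χ hχ
      simp only [TL, Finset.mem_union] at hχ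
      rcases hχ with h | h
      · have := ih1 χ h; simp only [fsize]; omega
      · have := ih2 χ h; simp only [fsize]; omega
  | know i φ ih =>
      intro χ hχ
      simp only [TL, Finset.mem_singleton] at hχ
      subst hχ
      simp only [body, fsize]
      omega
  | common Γ φ ih =>
      intro χ hχ
      simp only [TL, Finset.mem_singleton] at hχ
      subst hχ
      simp only [body, fsize]
      omega
  | dia X φ ih =>
      intro χ hχ
      simp only [TL, Finset.mem_singleton] at hχ
      subst hχ
      simp only [body, fsize]
      omega

/-- The function `f(φ) = base · ∏_{Xψ top-level subformula of φ} 2^{f(ψ)}`, where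
`base = 2·|G|²·∏_{p ∈ Var} |Q_p|` is supplied as a parameter. -/
def fval {m : ℕ} {V : Type} [DecidableEq V] (base : ℕ) (φ : EHSFormula m V) : ℕ :=
  base * ∏ χ ∈ (TL φ).attach, 2 ^ fval base (body χ.1)
termination_by fsize φ
decreasing_by all_goals exact fsize_body_lt φ χ.1 χ.2

namespace ISRL

variable {m : ℕ} {Var : Type}

/-- The relation on intervals associated with a top-level (modal) subformula:
`R_{K_i} = ∼_i`, `R_{C_Γ} = ∼_Γ`, and `R_{⟨X⟩} = R_X`. -/
def modRel (IS : ISRL m Var) {W : Type} : EHSFormula m W → Interval IS → Interval IS → Prop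
  | .know i _ => IS.simI i
  | .common Γ _ => IS.simC Γ
  | .dia X _ => IS.hsRel X
  | _ => fun _ _ => False

/-- Equality of the modal context trees `MCT_I^φ = MCT_{I'}^φ`, expressed recursively:
the root labels `(g(first(I)), g(last(I)), pi(I), 𝒜_{g(I)})` coincide, and for every
top-level subformula `Xψ` of `φ` the sets of subtrees `{MCT_J^ψ : I R_X J}` and
`{MCT_{J'}^ψ : I' R_X J'}` coincide. -/
def MCTEq (IS : ISRL m Var) [DecidableEq Var] (Q : Var → Type) (dfa : ∀ p, DFA IS.G (Q p))
    (φ : EHSFormula m Var) (I I' : Interval IS) : Prop :=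
  IS.gOf I.first = IS.gOf I'.first ∧
  IS.gOf I.last = IS.gOf I'.last ∧
  (I.isPt ↔ I'.isPt) ∧
  (∀ p, (dfa p).eval I.gword = (dfa p).eval I'.gword) ∧
  (∀ χ ∈ TL φ,
    (∀ J, IS.modRel χ I J → ∃ J', IS.modRel χ I' J' ∧ MCTEq IS Q dfa (body χ) J J') ∧
    (∀ J', IS.modRel χ I' J' → ∃ J, IS.modRel χ I J ∧ MCTEq IS Q dfa (body χ) J J'))
termination_by fsize φ
decreasing_by all_goals exact fsize_body_lt φ _ (by assumption)

end ISRL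

/-! Induction on `φ`. Suppose that for each top-level subformula `Xψ` we have at most `f(ψ)`
intervals representing all trees `MCT^ψ`. Two intervals with the same root label that reach
(via `R_X`) the trees of the same representatives, for every `Xψ`, have the same tree `MCT^φ`.
This signature takes at most `2·|G|²·∏|Q_p| · ∏_{Xψ} 2^{f(ψ)} = f(φ)` values, and one interval
per value represents all trees `MCT^φ`. -/

theorem exists_list_forall_exists_of_signature {α S : Type*} [Fintype S] (sig : α → S)
    {E : α → α → Prop} (hE : ∀ a b, sig a = sig b → E a b) :
    ∃ reps : List α, reps.length ≤ Fintype.card S ∧ ∀ a, ∃ b ∈ reps, E a b := by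
  classical
  refine ⟨(Finset.univ : Finset (Set.range sig)).toList.map (Set.rangeSplitting sig), ?_,
    fun a => ?_⟩
  · rw [List.length_map, Finset.length_toList, Finset.card_univ]
    exact Fintype.card_subtype_le _
  · refine ⟨Set.rangeSplitting sig ⟨sig a, Set.mem_range_self a⟩, by simp, hE _ _ ?_⟩
    exact (Set.apply_rangeSplitting sig ⟨sig a, Set.mem_range_self a⟩).symm

namespace ISRL

variable {m : ℕ} {Var : Type} [DecidableEq Var] {IS : ISRL m Var} {Q : Var → Type}
  {dfa : ∀ p, DFA IS.G (Q p)}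

namespace MCTEq

theorem refl (φ : EHSFormula m Var) (I : Interval IS) : MCTEq IS Q dfa φ I I := by
  rw [MCTEq]
  exact ⟨rfl, rfl, Iff.rfl, fun _ => rfl, fun χ hχ =>
    ⟨fun J hJ => ⟨J, hJ, refl (body χ) J⟩, fun J hJ => ⟨J, hJ, refl (body χ) J⟩⟩⟩
termination_by fsize φ
decreasing_by all_goals exact fsize_body_lt φ χ hχ

theorem symm {φ : EHSFormula m Var} {I I' : Interval IS} (h : MCTEq IS Q dfa φ I I') :
    MCTEq IS Q dfa φ I' I := by
  rw [MCTEq] at h ⊢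
  obtain ⟨hfirst, hlast, hpt, hdfa, hsub⟩ := h
  refine ⟨hfirst.symm, hlast.symm, hpt.symm, fun p => (hdfa p).symm,
    fun χ hχ => ⟨?_, ?_⟩⟩
  · intro J hJ
    obtain ⟨J', hJ', hJJ'⟩ := (hsub χ hχ).2 J hJ
    exact ⟨J', hJ', symm hJJ'⟩
  · intro J hJ
    obtain ⟨J', hJ', hJJ'⟩ := (hsub χ hχ).1 J hJ
    exact ⟨J', hJ', symm hJJ'⟩
termination_by fsize φ
decreasing_by all_goals exact fsize_body_lt φ χ hχ

theorem trans {φ : EHSFormula m Var} {I₁ I₂ I₃ : Interval IS} (h₁₂ : MCTEq IS Q dfa φ I₁ I₂)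
    (h₂₃ : MCTEq IS Q dfa φ I₂ I₃) : MCTEq IS Q dfa φ I₁ I₃ := by
  rw [MCTEq] at h₁₂ h₂₃ ⊢
  obtain ⟨hfirst, hlast, hpt, hdfa, hsub⟩ := h₁₂
  obtain ⟨hfirst', hlast', hpt', hdfa', hsub'⟩ := h₂₃
  refine ⟨hfirst.trans hfirst', hlast.trans hlast', hpt.trans hpt',
    fun p => (hdfa p).trans (hdfa' p), fun χ hχ => ⟨?_, ?_⟩⟩
  · intro J₁ hJ₁
    obtain ⟨J₂, hJ₂, h₁⟩ := (hsub χ hχ).1 J₁ hJ₁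
    obtain ⟨J₃, hJ₃, h₂⟩ := (hsub' χ hχ).1 J₂ hJ₂
    exact ⟨J₃, hJ₃, trans h₁ h₂⟩
  · intro J₃ hJ₃
    obtain ⟨J₂, hJ₂, h₂⟩ := (hsub' χ hχ).2 J₃ hJ₃
    obtain ⟨J₁, hJ₁, h₁⟩ := (hsub χ hχ).2 J₂ hJ₂
    exact ⟨J₁, hJ₁, trans h₁ h₂⟩
termination_by fsize φ
decreasing_by all_goals exact fsize_body_lt φ χ hχ

end MCTEq

variable (IS Q) in
abbrev MCTSig (φ : EHSFormula m Var) (r : TL φ → List (Interval IS)) : Type :=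
  IS.G × IS.G × Prop × (∀ p, Q p) × ∀ χ : TL φ, Fin (r χ).length → Prop

variable (dfa) in
/-- The root label of `MCT_I^φ`, together with, for each top-level `χ` of `φ`, the set of
representatives `(r χ)[k]` whose tree is the tree of some `J` with `I R_χ J`. -/
def mctSig (φ : EHSFormula m Var) (r : TL φ → List (Interval IS)) (I : Interval IS) :
    MCTSig IS Q φ r :=
  (IS.gOf I.first, IS.gOf I.last, I.isPt, fun p => (dfa p).eval I.gword,
    fun χ k => ∃ J, IS.modRel χ.1 I J ∧ MCTEq IS Q dfa (body χ.1) (r χ)[k] J)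

theorem exists_modRel_mctEq_of_mctSig_eq {φ : EHSFormula m Var}
    {r : TL φ → List (Interval IS)}
    (hr : ∀ χ J, ∃ J₀ ∈ r χ, MCTEq IS Q dfa (body χ.1) J J₀) {I I' : Interval IS}
    (h : mctSig dfa φ r I = mctSig dfa φ r I') (χ : TL φ) {J : Interval IS}
    (hJ : IS.modRel χ.1 I J) : ∃ J', IS.modRel χ.1 I' J' ∧ MCTEq IS Q dfa (body χ.1) J J' := by
  obtain ⟨J₀, hJ₀, hJJ₀⟩ := hr χ J
  obtain ⟨k, hk, rfl⟩ := List.getElem_of_mem hJ₀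
  have hreached : ∃ J', IS.modRel χ.1 I J' ∧ MCTEq IS Q dfa (body χ.1) (r χ)[k] J' :=
    ⟨J, hJ, hJJ₀.symm⟩
  have hsig := congrFun (congrFun (congrArg (fun s => s.2.2.2.2) h) χ) ⟨k, hk⟩
  obtain ⟨J', hJ', hJ₀J'⟩ := (iff_of_eq hsig).mp hreached
  exact ⟨J', hJ', hJJ₀.trans hJ₀J'⟩

theorem mctEq_of_mctSig_eq {φ : EHSFormula m Var} {r : TL φ → List (Interval IS)}
    (hr : ∀ χ J, ∃ J₀ ∈ r χ, MCTEq IS Q dfa (body χ.1) J J₀) {I I' : Interval IS}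
    (h : mctSig dfa φ r I = mctSig dfa φ r I') : MCTEq IS Q dfa φ I I' := by
  have hroot := h
  simp only [mctSig, Prod.mk.injEq] at hroot
  obtain ⟨hfirst, hlast, hpt, hdfa, -⟩ := hroot
  rw [MCTEq]
  refine ⟨hfirst, hlast, iff_of_eq hpt, congrFun hdfa,
    fun χ hχ => ⟨fun J hJ => ?_, fun J' hJ' => ?_⟩⟩
  · exact exists_modRel_mctEq_of_mctSig_eq hr h ⟨χ, hχ⟩ hJ
  · obtain ⟨J, hJ, hJ'J⟩ := exists_modRel_mctEq_of_mctSig_eq hr h.symm ⟨χ, hχ⟩ hJ'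
    exact ⟨J, hJ, hJ'J.symm⟩

variable [Fintype Var] [∀ p, Fintype (Q p)]

theorem card_mctSig_le {φ : EHSFormula m Var} {r : TL φ → List (Interval IS)}
    (hr : ∀ χ, (r χ).length ≤
      fval (2 * Fintype.card IS.G ^ 2 * ∏ p, Fintype.card (Q p)) (body χ.1)) :
    Fintype.card (MCTSig IS Q φ r) ≤
      fval (2 * Fintype.card IS.G ^ 2 * ∏ p, Fintype.card (Q p)) φ := by
  have hcard : Fintype.card (MCTSig IS Q φ r) =
      (2 * Fintype.card IS.G ^ 2 * ∏ p, Fintype.card (Q p)) *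
        ∏ χ : TL φ, 2 ^ (r χ).length := by
    simp only [MCTSig, Fintype.card_prod, Fintype.card_pi, Fintype.card_prop,
      Fintype.card_fin, Finset.prod_const, Finset.card_univ]
    ring
  rw [hcard, fval, ← Finset.univ_eq_attach]
  gcongr with χ
  · norm_num
  · exact hr χ

variable (IS Q dfa) in
theorem exists_list_forall_exists_mctEq (φ : EHSFormula m Var) :
    ∃ reps : List (Interval IS),
      reps.length ≤ fval (2 * Fintype.card IS.G ^ 2 * ∏ p, Fintype.card (Q p)) φ ∧
      ∀ I, ∃ J ∈ reps, MCTEq IS Q dfa φ I J := by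
  choose r hlen hr using fun χ : TL φ => exists_list_forall_exists_mctEq (body χ.1)
  obtain ⟨reps, hreps, hcover⟩ := exists_list_forall_exists_of_signature (mctSig dfa φ r)
    fun _ _ => mctEq_of_mctSig_eq hr
  exact ⟨reps, hreps.trans (card_mctSig_le hlen), hcover⟩
termination_by fsize φ
decreasing_by all_goals exact fsize_body_lt φ χ.1 χ.2

end ISRL

open ISRL in
theorem stmt6_general {m : ℕ} {Var : Type} [Fintype Var] [DecidableEq Var] (IS : ISRL m Var)
    (Q : Var → Type) [∀ p, Fintype (Q p)] (dfa : ∀ p, DFA IS.G (Q p))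
    (φ : EHSFormula m Var) :
    ∃ reps : List (ISRL.Interval IS),
      reps.length ≤ fval (2 * Fintype.card IS.G ^ 2 * ∏ p, Fintype.card (Q p)) φ ∧
      ∀ I : ISRL.Interval IS, ∃ J ∈ reps, MCTEq IS Q dfa φ I J :=
  exists_list_forall_exists_mctEq IS Q dfa φ

open ISRL in
/-- Lemma 1: for every ISRL with model `M` and every EHS⁺_{AB̄N} formula `φ`,
the set `{MCT_I^φ : I an interval of M}` has at most `f(φ)` elements; i.e. there is a list of
at most `f(φ)` intervals whose modal context trees w.r.t. `φ` exhaust all of them. -/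
theorem stmt6 {m : ℕ} {Var : Type} [Fintype Var] [DecidableEq Var] (IS : ISRL m Var)
    (Q : Var → Type) [∀ p, Fintype (Q p)] (dfa : ∀ p, DFA IS.G (Q p))
    (hdfa : ∀ p, (dfa p).accepts = (IS.lab p).matches')
    (φ : EHSFormula m Var) (hφ : IsABN φ) :
    ∃ reps : List (ISRL.Interval IS),
      reps.length ≤ fval (2 * Fintype.card IS.G ^ 2 * ∏ p, Fintype.card (Q p)) φ ∧
      ∀ I : ISRL.Interval IS, ∃ J ∈ reps, MCTEq IS Q dfa φ I J :=
  stmt6_general IS Q dfa φ
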